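/- arXiv:1311.6034 — 8 statements merged into one kernel-verified Lean document; each statement's English description precedes it below -/
import Mathlib

section
/- Spherical law of cosines (Lobachevsky's general spherical triangle formula): for linearly independent unit vectors A, B, C in a real inner product space, with sides a = ∠(B,C), b = ∠(A,C), c = ∠(A,B) and vertex angle at C equal to ∠(A − ⟨A,C⟩•C, B − ⟨B,C⟩•C), one has cos c = cos a · cos b + sin a · sin b · cos(vertex angle at C). -/
open InnerProductGeometry

/-! The projections `u = A - ⟪A, C⟫ • C` and `v = B - ⟪B, C⟫ • C` satisfy
`‖u‖ = sin b`, `‖v‖ = sin a` and `⟪u, v⟫ = ⟪A, B⟫ - ⟪A, C⟫ * ⟪B, C⟫`, while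
`‖u‖ * ‖v‖ * cos ∠(u, v) = ⟪u, v⟫` holds for all vectors (both sides vanish when `u` or `v`
is zero). Reading `⟪·, ·⟫` of unit vectors as cosines gives the formula. -/

section

variable {E : Type*} [NormedAddCommGroup E] [InnerProductSpace ℝ E]

lemma inner_sub_inner_smul_sub_inner_smul {z : E} (hz : ‖z‖ = 1) (x y : E) :
    inner ℝ (x - inner ℝ x z • z) (y - inner ℝ y z • z) =
      inner ℝ x y - inner ℝ x z * inner ℝ y z := by
  have hzz : inner ℝ z z = (1 : ℝ) := by rw [real_inner_self_eq_norm_sq, hz, one_pow]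
  simp only [inner_sub_left, inner_sub_right, real_inner_smul_left, real_inner_smul_right,
    hzz, real_inner_comm z x, real_inner_comm z y]
  ring

lemma norm_sub_inner_smul_eq_norm_mul_sin_angle {y : E} (hy : ‖y‖ = 1) (x : E) :
    ‖x - inner ℝ x y • y‖ = ‖x‖ * Real.sin (angle x y) := by
  have hsq : ‖x - inner ℝ x y • y‖ ^ 2 =
      inner ℝ x x * inner ℝ y y - inner ℝ x y * inner ℝ x y := by
    rw [← real_inner_self_eq_norm_sq, inner_sub_inner_smul_sub_inner_smul hy,
      real_inner_self_eq_norm_sq y, hy]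
    ring
  rw [mul_comm, ← mul_one ‖x‖, ← hy, sin_angle_mul_norm_mul_norm, ← hsq,
    Real.sqrt_sq (norm_nonneg _)]

lemma real_inner_eq_cos_angle {x y : E} (hx : ‖x‖ = 1) (hy : ‖y‖ = 1) :
    inner ℝ x y = Real.cos (angle x y) := by
  rw [← cos_angle_mul_norm_mul_norm, hx, hy, mul_one, mul_one]

end

theorem spherical_law_of_cosines_general
    {E : Type*} [NormedAddCommGroup E] [InnerProductSpace ℝ E]
    (A B C : E) (hA : ‖A‖ = 1) (hB : ‖B‖ = 1) (hC : ‖C‖ = 1) :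
    Real.cos (angle A B) =
      Real.cos (angle B C) * Real.cos (angle A C) +
      Real.sin (angle B C) * Real.sin (angle A C) *
        Real.cos (angle (A - (inner ℝ A C : ℝ) • C) (B - (inner ℝ B C : ℝ) • C)) := by
  set u := A - inner ℝ A C • C
  set v := B - inner ℝ B C • C
  have hu : ‖u‖ = Real.sin (angle A C) := by
    rw [norm_sub_inner_smul_eq_norm_mul_sin_angle hC, hA, one_mul]
  have hv : ‖v‖ = Real.sin (angle B C) := by
    rw [norm_sub_inner_smul_eq_norm_mul_sin_angle hC, hB, one_mul]
  calc Real.cos (angle A B)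
      = inner ℝ A C * inner ℝ B C + inner ℝ u v := by
        rw [inner_sub_inner_smul_sub_inner_smul hC, real_inner_eq_cos_angle hA hB]
        ring
    _ = Real.cos (angle B C) * Real.cos (angle A C) + ‖v‖ * ‖u‖ * Real.cos (angle u v) := by
        rw [← cos_angle_mul_norm_mul_norm u v, real_inner_eq_cos_angle hA hC,
          real_inner_eq_cos_angle hB hC]
        ring
    _ = _ := by rw [hu, hv]

/-- Spherical law of cosines for a spherical triangle given by linearly independent
unit vectors `A`, `B`, `C` in a real inner product space:
`cos c = cos a * cos b + sin a * sin b * cos C` where `a = ∠(B,C)`, `b = ∠(A,C)`,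
`c = ∠(A,B)` and the vertex angle at `C` is the angle between the projections of
`A` and `B` to the orthogonal complement of `C`. -/
theorem spherical_law_of_cosines
    {E : Type*} [NormedAddCommGroup E] [InnerProductSpace ℝ E]
    (A B C : E) (hA : ‖A‖ = 1) (hB : ‖B‖ = 1) (hC : ‖C‖ = 1)
    (hli : LinearIndependent ℝ ![A, B, C]) :
    Real.cos (angle A B) =
      Real.cos (angle B C) * Real.cos (angle A C) +
      Real.sin (angle B C) * Real.sin (angle A C) *
        Real.cos (angle (A - (inner ℝ A C : ℝ) • C) (B - (inner ℝ B C : ℝ) • C)) :=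
  spherical_law_of_cosines_general A B C hA hB hC
end

section
/- Spherical Pythagorean theorem (third equation of Lobachevsky's right-triangle list): for linearly independent unit vectors A, B, C in a real inner product space such that the vertex angle at C is π/2 (equivalently ⟨A − ⟨A,C⟩•C, B − ⟨B,C⟩•C⟩ = 0), one has cos(∠(A,B)) = cos(∠(B,C)) · cos(∠(A,C)), i.e. cos c = cos a · cos b. -/
open InnerProductGeometry

theorem inner_sub_inner_smul_sub_inner_smul_of_norm_eq_one {E : Type*} [NormedAddCommGroup E]
    [InnerProductSpace ℝ E] {C : E} (hC : ‖C‖ = 1) (A B : E) :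
    inner ℝ (A - inner ℝ A C • C) (B - inner ℝ B C • C) =
      inner ℝ A B - inner ℝ A C * inner ℝ B C := by
  have hCC : inner ℝ C C = (1 : ℝ) := by rw [real_inner_self_eq_norm_sq, hC, one_pow]
  simp only [inner_sub_left, inner_sub_right, real_inner_smul_left, real_inner_smul_right, hCC,
    real_inner_comm C B]
  ring

theorem spherical_pythagoras_general
    {E : Type*} [NormedAddCommGroup E] [InnerProductSpace ℝ E]
    (A B C : E) (hA : ‖A‖ = 1) (hB : ‖B‖ = 1) (hC : ‖C‖ = 1)
    (hright : angle (A - (inner ℝ A C : ℝ) • C) (B - (inner ℝ B C : ℝ) • C) = Real.pi / 2) :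
    Real.cos (angle A B) = Real.cos (angle B C) * Real.cos (angle A C) := by
  have horth := (inner_eq_zero_iff_angle_eq_pi_div_two _ _).2 hright
  rw [inner_sub_inner_smul_sub_inner_smul_of_norm_eq_one hC, sub_eq_zero] at horth
  rw [← inner_eq_cos_angle_of_norm_eq_one hA hB, ← inner_eq_cos_angle_of_norm_eq_one hB hC,
    ← inner_eq_cos_angle_of_norm_eq_one hA hC, horth, mul_comm]

/-- Spherical Pythagorean theorem: for a spherical triangle given by linearly
independent unit vectors `A`, `B`, `C` with a right vertex angle at `C`,
`cos c = cos a * cos b`, i.e. `cos ∠(A,B) = cos ∠(B,C) * cos ∠(A,C)`. -/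
theorem spherical_pythagoras
    {E : Type*} [NormedAddCommGroup E] [InnerProductSpace ℝ E]
    (A B C : E) (hA : ‖A‖ = 1) (hB : ‖B‖ = 1) (hC : ‖C‖ = 1)
    (hli : LinearIndependent ℝ ![A, B, C])
    (hright : angle (A - (inner ℝ A C : ℝ) • C) (B - (inner ℝ B C : ℝ) • C) = Real.pi / 2) :
    Real.cos (angle A B) = Real.cos (angle B C) * Real.cos (angle A C) :=
  spherical_pythagoras_general A B C hA hB hC hright
end

section
/- First equation of Lobachevsky's spherical right-triangle list: for linearly independent unit vectors A, B, C in a real inner product space such that the vertex angle at C is π/2, one has sin(vertex angle at A) · sin(∠(A,B)) = sin(∠(B,C)), i.e. sin A · sin c = sin a. -/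
/-!
For unit vectors `A`, `B`, `C`, projecting `B` and `C` to `A^⊥` gives vectors of lengths `sin c` and
`sin b` whose Gram determinant is that of `A, B, C`; hence
`sin A · sin b · sin c = √(1 - ⟪A,B⟫² - ⟪A,C⟫² - ⟪B,C⟫² + 2⟪A,B⟫⟪A,C⟫⟪B,C⟫)`, an expression symmetric
in the three vertices. Reading it at `C`, where `sin C = 1`, gives `sin a · sin b`, and `sin b ≠ 0`
because `A` and `C` are independent.
-/

open InnerProductGeometry RealInnerProductSpace Real

namespace InnerProductGeometry

variable {E : Type*} [NormedAddCommGroup E] [InnerProductSpace ℝ E]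

noncomputable def sphericalAngle (A B C : E) : ℝ :=
  angle (B - ⟪B, A⟫ • A) (C - ⟪C, A⟫ • A)

variable {A B C : E}

theorem inner_sub_inner_smul_sub_inner_smul (hA : ‖A‖ = 1) (B C : E) :
    ⟪B - ⟪B, A⟫ • A, C - ⟪C, A⟫ • A⟫ = ⟪B, C⟫ - ⟪B, A⟫ * ⟪C, A⟫ := by
  have hAA : ⟪A, A⟫ = 1 := by rw [real_inner_self_eq_norm_sq, hA, one_pow]
  simp only [inner_sub_left, inner_sub_right, real_inner_smul_left, real_inner_smul_right, hAA,
    real_inner_comm A]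
  ring

theorem norm_sub_inner_smul_eq_sin_angle (hA : ‖A‖ = 1) (hB : ‖B‖ = 1) :
    ‖B - ⟪B, A⟫ • A‖ = sin (angle A B) := by
  have hBB : ⟪B, B⟫ = 1 := by rw [real_inner_self_eq_norm_sq, hB, one_pow]
  rw [norm_eq_sqrt_real_inner, inner_sub_inner_smul_sub_inner_smul hA, hBB,
    sin_eq_sqrt_one_sub_cos_sq (angle_nonneg A B) (angle_le_pi A B), cos_angle, hA, hB,
    real_inner_comm A B]
  congr 1
  ring

theorem sin_sphericalAngle_mul_sin_angle_mul_sin_angle (hA : ‖A‖ = 1) (hB : ‖B‖ = 1)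
    (hC : ‖C‖ = 1) :
    sin (sphericalAngle A B C) * sin (angle A B) * sin (angle A C) =
      √(1 - ⟪A, B⟫ ^ 2 - ⟪A, C⟫ ^ 2 - ⟪B, C⟫ ^ 2 + 2 * ⟪A, B⟫ * ⟪A, C⟫ * ⟪B, C⟫) := by
  have hBB : ⟪B, B⟫ = 1 := by rw [real_inner_self_eq_norm_sq, hB, one_pow]
  have hCC : ⟪C, C⟫ = 1 := by rw [real_inner_self_eq_norm_sq, hC, one_pow]
  rw [mul_assoc, ← norm_sub_inner_smul_eq_sin_angle hA hB, ← norm_sub_inner_smul_eq_sin_angle hA hC,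
    sphericalAngle, sin_angle_mul_norm_mul_norm]
  simp only [inner_sub_inner_smul_sub_inner_smul hA]
  rw [hBB, hCC, real_inner_comm B A, real_inner_comm C A]
  congr 1
  ring

theorem sin_sphericalAngle_mul_sin_angle_mul_sin_angle_rotate (hA : ‖A‖ = 1) (hB : ‖B‖ = 1)
    (hC : ‖C‖ = 1) :
    sin (sphericalAngle A B C) * sin (angle A B) * sin (angle A C) =
      sin (sphericalAngle C A B) * sin (angle C A) * sin (angle C B) := by
  rw [sin_sphericalAngle_mul_sin_angle_mul_sin_angle hA hB hC,
    sin_sphericalAngle_mul_sin_angle_mul_sin_angle hC hA hB, real_inner_comm C A,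
    real_inner_comm C B]
  congr 1
  ring

theorem sub_smul_ne_zero_of_linearIndependent (h : LinearIndependent ℝ ![A, B, C]) (r : ℝ) :
    C - r • A ≠ 0 := by
  have hAC : LinearIndependent ℝ ![A, C] := by
    convert h.comp ![0, 2] (by decide) using 1
    ext i; fin_cases i <;> rfl
  intro hz
  exact one_ne_zero (LinearIndependent.pair_iff.mp hAC (-r) 1 (by rw [← hz]; module)).2

end InnerProductGeometry

/-- First equation of Lobachevsky's spherical right-triangle list: for a spherical
triangle given by linearly independent unit vectors `A`, `B`, `C` with a right
vertex angle at `C`, `sin A * sin c = sin a`, i.e.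
`sin (vertex angle at A) * sin ∠(A,B) = sin ∠(B,C)`. -/
theorem spherical_sin_right
    {E : Type*} [NormedAddCommGroup E] [InnerProductSpace ℝ E]
    (A B C : E) (hA : ‖A‖ = 1) (hB : ‖B‖ = 1) (hC : ‖C‖ = 1)
    (hli : LinearIndependent ℝ ![A, B, C])
    (hright : angle (A - (inner ℝ A C : ℝ) • C) (B - (inner ℝ B C : ℝ) • C) = Real.pi / 2) :
    Real.sin (angle (B - (inner ℝ B A : ℝ) • A) (C - (inner ℝ C A : ℝ) • A)) *
      Real.sin (angle A B) = Real.sin (angle B C) := by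
  have hb : sin (angle A C) ≠ 0 := by
    rw [← norm_sub_inner_smul_eq_sin_angle hA hC]
    exact norm_ne_zero_iff.mpr (sub_smul_ne_zero_of_linearIndependent hli _)
  have hsines := sin_sphericalAngle_mul_sin_angle_mul_sin_angle_rotate hA hB hC
  rw [show sphericalAngle C A B = π / 2 from hright, sin_pi_div_two, one_mul, angle_comm C A,
    angle_comm C B] at hsines
  exact mul_right_cancel₀ hb (hsines.trans (mul_comm _ _))
end

section
/- Spherical law of sines (first equation of Lobachevsky's general spherical list): for linearly independent unit vectors A, B, C in a real inner product space, sin(∠(B,C)) · sin(vertex angle at B) = sin(∠(A,C)) · sin(vertex angle at A), i.e. sin a · sin B = sin b · sin A. -/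
/-!
For a unit vector `x`, the projection `y - ⟪y, x⟫ • x` of a unit vector `y` to `x⟂` has norm
`sin ∠(x, y)`. Hence, with `P`, `Q` the projections of `y`, `z`, the product
`sin ∠(x, y) * sin ∠(x, z) * sin ∠(P, Q) = ‖P‖ * ‖Q‖ * sin ∠(P, Q) = √(‖P‖² ‖Q‖² - ⟪P, Q⟫²)`
is the square root of the Gram determinant of `x, y, z`, which is symmetric in the three vectors.
Applied at the vertices `A` and `B` this gives `sin c * sin b * sin A = sin c * sin a * sin B`,
and `sin c ≠ 0` because `A` and `B` are linearly independent.
-/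

open InnerProductGeometry RealInnerProductSpace

namespace InnerProductGeometry

variable {V : Type*} [NormedAddCommGroup V] [InnerProductSpace ℝ V]

theorem inner_sub_inner_smul_sub_inner_smul_s4 {x : V} (hx : ‖x‖ = 1) (y z : V) :
    ⟪y - ⟪y, x⟫ • x, z - ⟪z, x⟫ • x⟫ = ⟪y, z⟫ - ⟪y, x⟫ * ⟪z, x⟫ := by
  have hxx : ⟪x, x⟫ = 1 := by rw [real_inner_self_eq_norm_sq, hx, one_pow]
  simp only [inner_sub_left, inner_sub_right, real_inner_smul_left, real_inner_smul_right, hxx,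
    real_inner_comm x]
  ring

theorem norm_sub_inner_smul_eq_sin_angle_s4 {x y : V} (hx : ‖x‖ = 1) (hy : ‖y‖ = 1) :
    ‖y - ⟪y, x⟫ • x‖ = Real.sin (angle x y) := by
  have hxx : ⟪x, x⟫ = 1 := by rw [real_inner_self_eq_norm_sq, hx, one_pow]
  have hyy : ⟪y, y⟫ = 1 := by rw [real_inner_self_eq_norm_sq, hy, one_pow]
  calc ‖y - ⟪y, x⟫ • x‖ = √(⟪x, x⟫ * ⟪y, y⟫ - ⟪x, y⟫ * ⟪x, y⟫) := by
        rw [norm_eq_sqrt_real_inner, inner_sub_inner_smul_sub_inner_smul_s4 hx, hxx, hyy,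
          real_inner_comm x y, one_mul]
    _ = Real.sin (angle x y) := by rw [← sin_angle_mul_norm_mul_norm, hx, hy, mul_one, mul_one]

theorem sin_angle_mul_sin_angle_mul_sin_angle_sub_inner_smul {x y z : V} (hx : ‖x‖ = 1)
    (hy : ‖y‖ = 1) (hz : ‖z‖ = 1) :
    Real.sin (angle x y) * Real.sin (angle x z) *
        Real.sin (angle (y - ⟪y, x⟫ • x) (z - ⟪z, x⟫ • x)) =
      √(1 - ⟪x, y⟫ ^ 2 - ⟪x, z⟫ ^ 2 - ⟪y, z⟫ ^ 2 + 2 * ⟪x, y⟫ * ⟪x, z⟫ * ⟪y, z⟫) := by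
  rw [← norm_sub_inner_smul_eq_sin_angle_s4 hx hy, ← norm_sub_inner_smul_eq_sin_angle_s4 hx hz, mul_comm,
    sin_angle_mul_norm_mul_norm, inner_sub_inner_smul_sub_inner_smul_s4 hx,
    inner_sub_inner_smul_sub_inner_smul_s4 hx, inner_sub_inner_smul_sub_inner_smul_s4 hx,
    real_inner_self_eq_norm_sq, real_inner_self_eq_norm_sq, hy, hz, real_inner_comm x y,
    real_inner_comm x z]
  congr 1
  ring

theorem sin_angle_ne_zero_of_linearIndependent {x y : V} (h : LinearIndependent ℝ ![x, y]) :
    Real.sin (angle x y) ≠ 0 := by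
  rw [Ne, sin_eq_zero_iff_angle_eq_zero_or_angle_eq_pi, angle_eq_zero_iff, angle_eq_pi_iff]
  rintro (⟨-, r, -, rfl⟩ | ⟨-, r, -, rfl⟩) <;>
    simpa using LinearIndependent.pair_iff.mp h r (-1) (by rw [neg_one_smul, add_neg_cancel])

end InnerProductGeometry

/-- Spherical law of sines: for a spherical triangle given by linearly independent
unit vectors `A`, `B`, `C`, `sin a * sin B = sin b * sin A`, i.e.
`sin ∠(B,C) * sin (vertex angle at B) = sin ∠(A,C) * sin (vertex angle at A)`. -/
theorem spherical_law_of_sines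
    {E : Type*} [NormedAddCommGroup E] [InnerProductSpace ℝ E]
    (A B C : E) (hA : ‖A‖ = 1) (hB : ‖B‖ = 1) (hC : ‖C‖ = 1)
    (hli : LinearIndependent ℝ ![A, B, C]) :
    Real.sin (angle B C) *
      Real.sin (angle (A - (inner ℝ A B : ℝ) • B) (C - (inner ℝ C B : ℝ) • B)) =
    Real.sin (angle A C) *
      Real.sin (angle (B - (inner ℝ B A : ℝ) • A) (C - (inner ℝ C A : ℝ) • A)) := by
  have hAB : LinearIndependent ℝ ![A, B] := by
    convert hli.comp ![0, 1] (by decide) using 1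
    ext i; fin_cases i <;> rfl
  have atB := sin_angle_mul_sin_angle_mul_sin_angle_sub_inner_smul hB hA hC
  have atA := sin_angle_mul_sin_angle_mul_sin_angle_sub_inner_smul hA hB hC
  rw [angle_comm B A, real_inner_comm A B] at atB
  refine mul_left_cancel₀ (sin_angle_ne_zero_of_linearIndependent hAB) ?_
  rw [← mul_assoc, ← mul_assoc, atB, atA]
  congr 1
  ring
end

section
/- Lobachevsky's form of the hyperbolic law of cosines (second equation of his system (19)) is equivalent to the modern form: for all real a, b, c and all real A, the equation 1 − cos(Π(b)) · cos(Π(c)) · cos A = sin(Π(b)) · sin(Π(c)) / sin(Π(a)) holds if and only if cosh a = cosh b · cosh c − sinh b · sinh c · cos A. -/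
/-!
With `x = exp (-p)`, the double-angle formulas give `sin Π(p) = 2x / (1 + x²) = 1 / cosh p` and
`cos Π(p) = (1 - x²) / (1 + x²) = tanh p`. After this substitution Lobachevsky's equation, multiplied
by `cosh b * cosh c`, is the modern law of cosines.
-/

noncomputable def angleOfParallelism (p : ℝ) : ℝ := 2 * Real.arctan (Real.exp (-p))

namespace Real

theorem sin_two_mul_arctan (x : ℝ) : sin (2 * arctan x) = 2 * x / (1 + x ^ 2) := by
  have hsq : √(1 + x ^ 2) ^ 2 = 1 + x ^ 2 := sq_sqrt (by positivity)
  rw [sin_two_mul, sin_arctan, cos_arctan]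
  field_simp
  rw [hsq]

theorem cos_two_mul_arctan (x : ℝ) : cos (2 * arctan x) = (1 - x ^ 2) / (1 + x ^ 2) := by
  rw [cos_two_mul, cos_sq_arctan]
  field_simp
  ring

end Real

open Real

theorem sin_angleOfParallelism (p : ℝ) : sin (angleOfParallelism p) = (cosh p)⁻¹ := by
  have hexp : exp p * exp (-p) = 1 := by rw [← exp_add, add_neg_cancel, exp_zero]
  rw [angleOfParallelism, sin_two_mul_arctan, cosh_eq]
  field_simp
  linear_combination hexp

theorem cos_angleOfParallelism (p : ℝ) : cos (angleOfParallelism p) = tanh p := by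
  have hexp : exp p * exp (-p) = 1 := by rw [← exp_add, add_neg_cancel, exp_zero]
  rw [angleOfParallelism, cos_two_mul_arctan, tanh_eq_sinh_div_cosh, sinh_eq, cosh_eq]
  field_simp
  linear_combination (-2 * exp (-p)) * hexp

theorem one_sub_div_mul_div_mul_eq_inv_mul_inv_div_inv_iff {u v : ℝ} (hu : u ≠ 0) (hv : v ≠ 0)
    (w s t k : ℝ) : 1 - s / u * (t / v) * k = u⁻¹ * v⁻¹ / w⁻¹ ↔ w = u * v - s * t * k := by
  field_simp
  constructor <;> intro h <;> linarith

/-- Lobachevsky's form of the hyperbolic law of cosines is equivalent to the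
modern form:
`1 - cos (Π b) * cos (Π c) * cos A = sin (Π b) * sin (Π c) / sin (Π a)`
iff `cosh a = cosh b * cosh c - sinh b * sinh c * cos A`. -/
theorem lobachevsky_law_of_cosines_iff (a b c A : ℝ) :
    1 - Real.cos (angleOfParallelism b) * Real.cos (angleOfParallelism c) * Real.cos A =
        Real.sin (angleOfParallelism b) * Real.sin (angleOfParallelism c) /
          Real.sin (angleOfParallelism a) ↔
      Real.cosh a = Real.cosh b * Real.cosh c - Real.sinh b * Real.sinh c * Real.cos A := by
  simp only [sin_angleOfParallelism, cos_angleOfParallelism, tanh_eq_sinh_div_cosh]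
  exact one_sub_div_mul_div_mul_eq_inv_mul_inv_div_inv_iff (cosh_pos b).ne' (cosh_pos c).ne' _ _ _ _
end

section
/- Euler's cevian relation in Euclidean geometry: let A, B, C be affinely independent points of a Euclidean affine space over ℝ, let O, a, b, c be points with a on the line through B and C, b on the line through C and A, c on the line through A and B, and suppose O lies strictly between A and a, strictly between B and b, and strictly between C and c. Then (dist A O / dist O a) · (dist B O / dist O b) · (dist C O / dist O c) = dist A O / dist O a + dist B O / dist O b + dist C O / dist O c + 2. -/
/-!
Write `O` in barycentric coordinates `(α, β, γ)` with respect to `A, B, C`. If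
`O = (1 - t) A + t a` with `a` on the line `BC`, then `α = 1 - t` by uniqueness of barycentric
coordinates, and `AO / Oa = t / (1 - t) = (1 - α) / α`; likewise for `β` and `γ`. With
`x = (1 - α) / α`, `y = (1 - β) / β`, `z = (1 - γ) / γ`, the relation `xyz = x + y + z + 2` is
then equivalent to `α + β + γ = 1`.
-/

open AffineMap Finset
open scoped Affine

namespace AffineIndependent

variable {k V P ι : Type*} [Ring k] [AddCommGroup V] [Module k V] [AddTorsor V P]
  [Fintype ι] [DecidableEq ι]

lemma weight_eq_one_sub_of_affineCombination_eq_lineMap {p : ι → P}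
    (hp : AffineIndependent k p) {w : ι → k} (hw : ∑ j, w j = 1) {i j l : ι} (hj : j ≠ i)
    (hl : l ≠ i) {x : P} (hx : x ∈ line[k, p j, p l]) {t : k}
    (h : univ.affineCombination k p w = lineMap (p i) x t) : w i = 1 - t := by
  obtain ⟨r, rfl⟩ := mem_affineSpan_pair_iff_exists_lineMap_eq.1 hx
  rw [← univ.affineCombination_affineCombinationLineMapWeights p (mem_univ j) (mem_univ l),
    ← univ.affineCombination_piSingle k p (mem_univ i), lineMap_affineCombination] at h
  have hweights := (affineIndependent_iff_eq_of_fintype_affineCombination_eq k p).1 hp _ _ hw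
    (by simp [lineMap_apply_module, sum_add_distrib, ← mul_sum]) h
  simpa [lineMap_apply_module, hj.symm, hl.symm] using congrFun hweights i

end AffineIndependent

lemma dist_left_lineMap_div_dist_lineMap_right {V P : Type*} [SeminormedAddCommGroup V]
    [NormedSpace ℝ V] [MetricSpace P] [NormedAddTorsor V P] {X Z : P} (hXZ : X ≠ Z) {t : ℝ}
    (ht₀ : 0 ≤ t) (ht₁ : t < 1) :
    dist X (lineMap X Z t) / dist (lineMap X Z t) Z = t / (1 - t) := by
  rw [dist_left_lineMap, dist_lineMap_right, Real.norm_of_nonneg ht₀,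
    Real.norm_of_nonneg (by linarith), mul_div_mul_right _ _ (dist_ne_zero.2 hXZ)]

lemma div_one_sub_mul_div_one_sub_mul_div_one_sub {x y z : ℝ} (hx : x ≠ 1) (hy : y ≠ 1)
    (hz : z ≠ 1) (hsum : (1 - x) + (1 - y) + (1 - z) = 1) :
    x / (1 - x) * (y / (1 - y)) * (z / (1 - z)) =
      x / (1 - x) + y / (1 - y) + z / (1 - z) + 2 := by
  have hx' : 1 - x ≠ 0 := sub_ne_zero.2 hx.symm
  have hy' : 1 - y ≠ 0 := sub_ne_zero.2 hy.symm
  have hz' : 1 - z ≠ 0 := sub_ne_zero.2 hz.symm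
  field_simp
  linear_combination -hsum

/-- Euler's cevian relation in Euclidean geometry: if `A`, `B`, `C` are affinely
independent points of a Euclidean affine space, `a`, `b`, `c` lie on the lines
`BC`, `CA`, `AB` respectively, and a point `O` lies strictly between `A` and `a`,
between `B` and `b`, and between `C` and `c`, then
`(AO/Oa) * (BO/Ob) * (CO/Oc) = AO/Oa + BO/Ob + CO/Oc + 2`. -/
theorem euler_cevian_relation
    {V P : Type*} [NormedAddCommGroup V] [InnerProductSpace ℝ V]
    [MetricSpace P] [NormedAddTorsor V P]
    (A B C O a b c : P)
    (hABC : AffineIndependent ℝ ![A, B, C])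
    (ha : a ∈ affineSpan ℝ {B, C})
    (hb : b ∈ affineSpan ℝ {C, A})
    (hc : c ∈ affineSpan ℝ {A, B})
    (hOa : Sbtw ℝ A O a) (hOb : Sbtw ℝ B O b) (hOc : Sbtw ℝ C O c) :
    (dist A O / dist O a) * (dist B O / dist O b) * (dist C O / dist O c) =
      dist A O / dist O a + dist B O / dist O b + dist C O / dist O c + 2 := by
  obtain ⟨⟨t₁, ht₁, hO₁⟩, hAa⟩ := sbtw_iff_mem_image_Ioo_and_ne.1 hOa
  obtain ⟨⟨t₂, ht₂, hO₂⟩, hBb⟩ := sbtw_iff_mem_image_Ioo_and_ne.1 hOb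
  obtain ⟨⟨t₃, ht₃, hO₃⟩, hCc⟩ := sbtw_iff_mem_image_Ioo_and_ne.1 hOc
  have hO : O ∈ affineSpan ℝ (Set.range ![A, B, C]) := by
    refine affineSpan_pair_le_of_mem_of_mem (mem_affineSpan ℝ (by simp))
      (affineSpan_mono ℝ ?_ ha) hOa.wbtw.mem_affineSpan
    simp [Set.insert_subset_iff]
  obtain ⟨w, hw, hwO⟩ := eq_affineCombination_of_mem_affineSpan_of_fintype hO
  have hw₀ : w 0 = 1 - t₁ := hABC.weight_eq_one_sub_of_affineCombination_eq_lineMap hw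
    (j := 1) (l := 2) (by decide) (by decide) ha (hwO.symm.trans hO₁.symm)
  have hw₁ : w 1 = 1 - t₂ := hABC.weight_eq_one_sub_of_affineCombination_eq_lineMap hw
    (j := 2) (l := 0) (by decide) (by decide) hb (hwO.symm.trans hO₂.symm)
  have hw₂ : w 2 = 1 - t₃ := hABC.weight_eq_one_sub_of_affineCombination_eq_lineMap hw
    (j := 0) (l := 1) (by decide) (by decide) hc (hwO.symm.trans hO₃.symm)
  have hA : dist A O / dist O a = t₁ / (1 - t₁) :=
    hO₁ ▸ dist_left_lineMap_div_dist_lineMap_right hAa ht₁.1.le ht₁.2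
  have hB : dist B O / dist O b = t₂ / (1 - t₂) :=
    hO₂ ▸ dist_left_lineMap_div_dist_lineMap_right hBb ht₂.1.le ht₂.2
  have hC : dist C O / dist O c = t₃ / (1 - t₃) :=
    hO₃ ▸ dist_left_lineMap_div_dist_lineMap_right hCc ht₃.1.le ht₃.2
  rw [hA, hB, hC]
  refine div_one_sub_mul_div_one_sub_mul_div_one_sub ht₁.2.ne ht₂.2.ne ht₃.2.ne ?_
  rw [← hw₀, ← hw₁, ← hw₂, ← hw, Fin.sum_univ_three]
end

section
/- Euler's cevian relation in spherical geometry: let A, B, C be linearly independent unit vectors in a real inner product space, let α, β, γ > 0, and set O = (αA + βB + γC)/‖αA + βB + γC‖, a = (βB + γC)/‖βB + γC‖, b = (αA + γC)/‖αA + γC‖, c = (αA + βB)/‖αA + βB‖. Assume each of the six angles ∠(A,O), ∠(O,a), ∠(B,O), ∠(O,b), ∠(C,O), ∠(O,c) is strictly less than π/2. Then (tan ∠(A,O) / tan ∠(O,a)) · (tan ∠(B,O) / tan ∠(O,b)) · (tan ∠(C,O) / tan ∠(O,c)) = tan ∠(A,O) / tan ∠(O,a) + tan ∠(B,O) / tan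 ∠(O,b) + tan ∠(C,O) / tan ∠(O,c) + 2. -/
open InnerProductGeometry
open scoped RealInnerProductSpace

/-! Put `u = αA + βB + γC`. For the cevian through `A`, split `u = x + w` with `x = αA` and
`w = βB + γC`. The angles `∠(A, O) = ∠(x, u)` and `∠(O, a) = ∠(u, w)` have the same sine-times-norms,
namely the area of the parallelogram spanned by `x` and `w` (a Gram determinant, invariant under
shearing), so the ratio of their tangents is the ratio of cosine-times-norms, `⟪w, u⟫ / ⟪x, u⟫`.
With `p, q, r = ⟪αA, u⟫, ⟪βB, u⟫, ⟪γC, u⟫` the three ratios are `(q + r) / p`, `(p + r) / q`,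
`(p + q) / r`, and these satisfy Euler's identity for any nonzero `p, q, r`. -/

theorem LinearIndependent.pair_smul_add_smul {K M ι : Type*} [Field K] [AddCommGroup M]
    [Module K M] {v : ι → M} (hv : LinearIndependent K v) {i j k : ι} (hij : i ≠ j)
    (hik : i ≠ k) (hjk : j ≠ k) {α β γ : K} (hα : α ≠ 0) (hβ : β ≠ 0) :
    LinearIndependent K ![α • v i, β • v j + γ • v k] := by
  refine LinearIndependent.pair_iff.2 fun s t hst => ?_
  have hl := linearIndependent_iff.1 hv
    (Finsupp.single i (s * α) + Finsupp.single j (t * β) + Finsupp.single k (t * γ))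
    (by simp only [map_add, Finsupp.linearCombination_single, mul_smul, ← hst]; module)
  exact ⟨by simpa [hij, hik, hα] using DFunLike.congr_fun hl i,
    by simpa [hij.symm, hjk, hβ] using DFunLike.congr_fun hl j⟩

theorem add_div_mul_add_div_mul_add_div {K : Type*} [Field K] {x y z : K}
    (hx : x ≠ 0) (hy : y ≠ 0) (hz : z ≠ 0) :
    (y + z) / x * ((x + z) / y) * ((x + y) / z) = (y + z) / x + (x + z) / y + (x + y) / z + 2 := by
  field_simp
  ring

namespace InnerProductGeometry

open Real

variable {E : Type*} [NormedAddCommGroup E] [InnerProductSpace ℝ E]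

def gramDet (x y : E) : ℝ := ⟪x, x⟫ * ⟪y, y⟫ - ⟪x, y⟫ * ⟪x, y⟫

theorem gramDet_self_add (x y : E) : gramDet x (x + y) = gramDet x y := by
  simp only [gramDet, inner_add_left, inner_add_right, real_inner_comm x y]
  ring

theorem gramDet_add_self (x y : E) : gramDet (x + y) y = gramDet x y := by
  simp only [gramDet, inner_add_left, inner_add_right, real_inner_comm x y]
  ring

theorem gramDet_pos {x y : E} (h : LinearIndependent ℝ ![x, y]) : 0 < gramDet x y := by
  have hx : x ≠ 0 := h.ne_zero 0
  refine (sub_nonneg.2 (real_inner_mul_inner_self_le x y)).lt_of_ne' fun h0 => ?_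
  have hcs : ‖⟪x, y⟫‖ = ‖x‖ * ‖y‖ := by
    rw [Real.norm_eq_abs, ← sq_eq_sq₀ (abs_nonneg _) (by positivity), sq_abs, mul_pow,
      ← real_inner_self_eq_norm_sq, ← real_inner_self_eq_norm_sq]
    linear_combination -h0
  have hpar : x = 0 ∨ ∃ r : ℝ, y = r • x := ((norm_inner_eq_norm_tfae ℝ x y).out 0 2).1 hcs
  obtain ⟨r, rfl⟩ := hpar.resolve_left hx
  exact (LinearIndependent.pair_iff' hx).1 h r rfl

/-- Also at right angles and for zero vectors, where both sides are `0`: `tan (π / 2) = 0` and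
`_ / 0 = 0`. -/
theorem tan_angle (x y : E) : tan (angle x y) = √(gramDet x y) / ⟪x, y⟫ := by
  rcases eq_or_ne x 0 with rfl | hx
  · simp [gramDet]
  rcases eq_or_ne y 0 with rfl | hy
  · simp [gramDet]
  have hN : ‖x‖ * ‖y‖ ≠ 0 := by positivity
  rw [tan_eq_sin_div_cos, ← mul_div_mul_right _ _ hN, sin_angle_mul_norm_mul_norm,
    cos_angle_mul_norm_mul_norm, gramDet]

theorem tan_angle_self_add_div_tan_angle_add_self {x y : E} (h : LinearIndependent ℝ ![x, y]) :
    tan (angle x (x + y)) / tan (angle (x + y) y) = ⟪y, x + y⟫ / ⟪x, x + y⟫ := by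
  rw [tan_angle, tan_angle, gramDet_self_add, gramDet_add_self, real_inner_comm y,
    div_div_div_cancel_left' _ _ (sqrt_pos.2 (gramDet_pos h)).ne']

theorem angle_inv_norm_smul_left (x y : E) : angle (‖x‖⁻¹ • x) y = angle x y := by
  rcases eq_or_ne x 0 with rfl | hx
  · simp
  · exact angle_smul_left_of_pos _ _ (inv_pos.2 (norm_pos_iff.2 hx))

theorem angle_inv_norm_smul_right (x y : E) : angle x (‖y‖⁻¹ • y) = angle x y := by
  rw [angle_comm, angle_inv_norm_smul_left, angle_comm]

theorem inner_pos_of_angle_lt_pi_div_two {x y : E} (h : angle x y < π / 2) : 0 < ⟪x, y⟫ := by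
  have hx : x ≠ 0 := by rintro rfl; simp at h
  have hy : y ≠ 0 := by rintro rfl; simp at h
  have hcos := cos_pos_of_mem_Ioo ⟨by linarith [angle_nonneg x y, pi_pos], h⟩
  rw [← cos_angle_mul_norm_mul_norm]
  positivity

theorem tan_angle_div_tan_angle_of_eq_smul_add {P w u : E} {t : ℝ} (ht : 0 < t)
    (hu : u = t • P + w) (h : LinearIndependent ℝ ![t • P, w]) :
    tan (angle P (‖u‖⁻¹ • u)) / tan (angle (‖u‖⁻¹ • u) (‖w‖⁻¹ • w)) = ⟪w, u⟫ / ⟪t • P, u⟫ := by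
  rw [angle_inv_norm_smul_right, angle_inv_norm_smul_left, angle_inv_norm_smul_right,
    ← angle_smul_left_of_pos P u ht, hu]
  exact tan_angle_self_add_div_tan_angle_add_self h

end InnerProductGeometry

theorem euler_spherical_cevian_relation_general
    {E : Type*} [NormedAddCommGroup E] [InnerProductSpace ℝ E]
    (A B C : E)
    (hli : LinearIndependent ℝ ![A, B, C])
    (α β γ : ℝ) (hα : 0 < α) (hβ : 0 < β) (hγ : 0 < γ)
    (O a b c : E)
    (hO : O = ‖α • A + β • B + γ • C‖⁻¹ • (α • A + β • B + γ • C))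
    (ha : a = ‖β • B + γ • C‖⁻¹ • (β • B + γ • C))
    (hb : b = ‖α • A + γ • C‖⁻¹ • (α • A + γ • C))
    (hc : c = ‖α • A + β • B‖⁻¹ • (α • A + β • B))
    (hAO : angle A O < Real.pi / 2)
    (hBO : angle B O < Real.pi / 2)
    (hCO : angle C O < Real.pi / 2) :
    (Real.tan (angle A O) / Real.tan (angle O a)) *
        (Real.tan (angle B O) / Real.tan (angle O b)) *
        (Real.tan (angle C O) / Real.tan (angle O c)) =
      Real.tan (angle A O) / Real.tan (angle O a) +
        Real.tan (angle B O) / Real.tan (angle O b) +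
        Real.tan (angle C O) / Real.tan (angle O c) + 2 := by
  subst hO ha hb hc
  set u := α • A + β • B + γ • C with hu
  have indep_A : LinearIndependent ℝ ![α • A, β • B + γ • C] :=
    hli.pair_smul_add_smul (i := 0) (j := 1) (k := 2) (by decide) (by decide)
      (by decide) hα.ne' hβ.ne'
  have indep_B : LinearIndependent ℝ ![β • B, α • A + γ • C] :=
    hli.pair_smul_add_smul (i := 1) (j := 0) (k := 2) (by decide) (by decide)
      (by decide) hβ.ne' hα.ne'
  have indep_C : LinearIndependent ℝ ![γ • C, α • A + β • B] :=
    hli.pair_smul_add_smul (i := 2) (j := 0) (k := 1) (by decide) (by decide)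
      (by decide) hγ.ne' hα.ne'
  rw [tan_angle_div_tan_angle_of_eq_smul_add hα (hu.trans (add_assoc _ _ _)) indep_A,
    tan_angle_div_tan_angle_of_eq_smul_add hβ (hu.trans (by abel)) indep_B,
    tan_angle_div_tan_angle_of_eq_smul_add hγ (hu.trans (by abel)) indep_C]
  have vertex_inner_ne_zero {P : E} {t : ℝ} (ht : 0 < t)
      (h : angle P (‖u‖⁻¹ • u) < Real.pi / 2) : ⟪t • P, u⟫ ≠ 0 := by
    rw [angle_inv_norm_smul_right, ← angle_smul_left_of_pos P u ht] at h
    exact (inner_pos_of_angle_lt_pi_div_two h).ne'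
  simp only [inner_add_left]
  exact add_div_mul_add_div_mul_add_div (vertex_inner_ne_zero hα hAO)
    (vertex_inner_ne_zero hβ hBO) (vertex_inner_ne_zero hγ hCO)

/-- Euler's cevian relation in spherical geometry: let `A`, `B`, `C` be linearly
independent unit vectors, `α, β, γ > 0`, and let `O`, `a`, `b`, `c` be the unit
vectors in the directions of `αA + βB + γC`, `βB + γC`, `αA + γC`, `αA + βB`
respectively (so `Aa`, `Bb`, `Cc` are concurrent spherical cevians through `O`).
If each of the six arcs `AO`, `Oa`, `BO`, `Ob`, `CO`, `Oc` is strictly shorter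
than `π/2`, then
`(tan AO / tan Oa) * (tan BO / tan Ob) * (tan CO / tan Oc)
  = tan AO / tan Oa + tan BO / tan Ob + tan CO / tan Oc + 2`. -/
theorem euler_spherical_cevian_relation
    {E : Type*} [NormedAddCommGroup E] [InnerProductSpace ℝ E]
    (A B C : E) (hA : ‖A‖ = 1) (hB : ‖B‖ = 1) (hC : ‖C‖ = 1)
    (hli : LinearIndependent ℝ ![A, B, C])
    (α β γ : ℝ) (hα : 0 < α) (hβ : 0 < β) (hγ : 0 < γ)
    (O a b c : E)
    (hO : O = ‖α • A + β • B + γ • C‖⁻¹ • (α • A + β • B + γ • C))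
    (ha : a = ‖β • B + γ • C‖⁻¹ • (β • B + γ • C))
    (hb : b = ‖α • A + γ • C‖⁻¹ • (α • A + γ • C))
    (hc : c = ‖α • A + β • B‖⁻¹ • (α • A + β • B))
    (hAO : angle A O < Real.pi / 2) (hOa : angle O a < Real.pi / 2)
    (hBO : angle B O < Real.pi / 2) (hOb : angle O b < Real.pi / 2)
    (hCO : angle C O < Real.pi / 2) (hOc : angle O c < Real.pi / 2) :
    (Real.tan (angle A O) / Real.tan (angle O a)) *
        (Real.tan (angle B O) / Real.tan (angle O b)) *
        (Real.tan (angle C O) / Real.tan (angle O c)) =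
      Real.tan (angle A O) / Real.tan (angle O a) +
        Real.tan (angle B O) / Real.tan (angle O b) +
        Real.tan (angle C O) / Real.tan (angle O c) + 2 :=
  euler_spherical_cevian_relation_general A B C hli α β γ hα hβ hγ O a b c hO ha hb hc hAO hBO hCO
end

section
/- The hyperbolic Pythagorean theorem degenerates to the Euclidean one as the space constant tends to infinity: let a ≥ 0 and b ≥ 0 be real numbers, and let c : ℝ → ℝ be any function such that for every k > 0 one has c k ≥ 0 and cosh (c k) = cosh (a/k) · cosh (b/k). Then the function k ↦ k · c k tends to √(a² + b²) as k → ∞ (Filter.Tendsto along atTop). -/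
/-!
Using cosh² = 1 + sinh², the relation `cosh c = cosh (a/k) * cosh (b/k)` becomes
`sinh² c = sinh² (a/k) * cosh² (b/k) + sinh² (b/k)`. Since `sinh` and `arsinh` are both
asymptotic to the identity at `0`, multiplying by `k²` shows that `k * sinh c`, and hence `k * c`,
tends to `√(a² + b²)`.
-/

open Real Filter Topology Asymptotics

lemma isEquivalent_id_of_hasDerivAt_one {f : ℝ → ℝ} (hf0 : f 0 = 0) (hf : HasDerivAt f 1 0) :
    f ~[𝓝 0] id := by
  show (fun x => f x - x) =o[𝓝 0] fun x => x
  simpa [hf0] using hf.isLittleO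

lemma Filter.Tendsto.mul_comp_of_hasDerivAt_one {α : Type*} {l : Filter α} {f : ℝ → ℝ}
    (hf0 : f 0 = 0) (hf : HasDerivAt f 1 0) {u v : α → ℝ} {L : ℝ}
    (hu : Tendsto u l (𝓝 0)) (hL : Tendsto (fun x => v x * u x) l (𝓝 L)) :
    Tendsto (fun x => v x * f (u x)) l (𝓝 L) := by
  have hfu : (f ∘ u) ~[l] u := (isEquivalent_id_of_hasDerivAt_one hf0 hf).comp_tendsto hu
  exact ((IsEquivalent.refl (u := v)).mul hfu).symm.tendsto_nhds hL

lemma tendsto_mul_sinh_div_atTop (a : ℝ) :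
    Tendsto (fun k : ℝ => k * sinh (a / k)) atTop (𝓝 a) := by
  have hdiv : Tendsto (fun k : ℝ => a / k) atTop (𝓝 0) :=
    tendsto_const_nhds.div_atTop tendsto_id
  refine hdiv.mul_comp_of_hasDerivAt_one sinh_zero (by simpa using hasDerivAt_sinh 0)
    (tendsto_const_nhds.congr' ?_)
  filter_upwards [eventually_ne_atTop 0] with k hk
  field_simp

lemma tendsto_cosh_div_atTop (b : ℝ) :
    Tendsto (fun k : ℝ => cosh (b / k)) atTop (𝓝 1) := by
  simpa [Function.comp_def] using
    (continuous_cosh.tendsto 0).comp (tendsto_const_nhds.div_atTop tendsto_id)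

lemma sinh_sq_of_cosh_eq_cosh_mul_cosh {x y z : ℝ} (h : cosh z = cosh x * cosh y) :
    sinh z ^ 2 = sinh x ^ 2 * cosh y ^ 2 + sinh y ^ 2 := by
  have hsq : cosh z ^ 2 = cosh x ^ 2 * cosh y ^ 2 := by rw [h, mul_pow]
  linear_combination hsq + cosh y ^ 2 * cosh_sq x + sinh_sq z - sinh_sq y

theorem hyperbolic_pythagoras_euclidean_limit_general
    (a b : ℝ) (c : ℝ → ℝ)
    (hc : ∀ k : ℝ, 0 < k → 0 ≤ c k ∧ Real.cosh (c k) = Real.cosh (a / k) * Real.cosh (b / k)) :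
    Filter.Tendsto (fun k : ℝ => k * c k) Filter.atTop
      (nhds (Real.sqrt (a ^ 2 + b ^ 2))) := by
  have hrad : Tendsto (fun k : ℝ => (k * sinh (a / k)) ^ 2 * cosh (b / k) ^ 2
      + (k * sinh (b / k)) ^ 2) atTop (𝓝 (a ^ 2 + b ^ 2)) := by
    simpa using (((tendsto_mul_sinh_div_atTop a).pow 2).mul
      ((tendsto_cosh_div_atTop b).pow 2)).add ((tendsto_mul_sinh_div_atTop b).pow 2)
  have hsinh : Tendsto (fun k => k * sinh (c k)) atTop (𝓝 √(a ^ 2 + b ^ 2)) := by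
    refine hrad.sqrt.congr' ?_
    filter_upwards [eventually_gt_atTop 0] with k hk
    obtain ⟨hc_nonneg, hc_cosh⟩ := hc k hk
    have hnonneg : 0 ≤ k * sinh (c k) := mul_nonneg hk.le (sinh_nonneg_iff.mpr hc_nonneg)
    rw [← sqrt_sq hnonneg, mul_pow k (sinh (c k)), sinh_sq_of_cosh_eq_cosh_mul_cosh hc_cosh]
    congr 1; ring
  have hsinh_zero : Tendsto (fun k => sinh (c k)) atTop (𝓝 0) := by
    simpa using (hsinh.mul tendsto_inv_atTop_zero).congr'
      ((eventually_ne_atTop 0).mono fun k hk => by field_simp)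
  simpa using hsinh_zero.mul_comp_of_hasDerivAt_one arsinh_zero
    (by simpa using hasDerivAt_arsinh 0) hsinh

/-- The hyperbolic Pythagorean theorem degenerates to the Euclidean one as the
space constant tends to infinity: if for every `k > 0` the rescaled hypotenuse
`c k ≥ 0` satisfies `cosh (c k) = cosh (a/k) * cosh (b/k)`, then `k * c k` tends
to `√(a² + b²)` as `k → ∞`. -/
theorem hyperbolic_pythagoras_euclidean_limit
    (a b : ℝ) (ha : 0 ≤ a) (hb : 0 ≤ b) (c : ℝ → ℝ)
    (hc : ∀ k : ℝ, 0 < k → 0 ≤ c k ∧ Real.cosh (c k) = Real.cosh (a / k) * Real.cosh (b / k)) :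
    Filter.Tendsto (fun k : ℝ => k * c k) Filter.atTop
      (nhds (Real.sqrt (a ^ 2 + b ^ 2))) :=
  hyperbolic_pythagoras_euclidean_limit_general a b c hc
end
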